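/- Let φ ∈ C²((0,∞); ℝ) and F > 0 with φ''(2F) ≤ 0. Then for every u ∈ 𝒰, E_qce''(y_F)[u,u] ≥ (A_F + φ''(2F)) ‖u'‖²_{ℓ²_ε}. -/

import Mathlib

/-! Along the ray `y_F + r u` every bond length is affine in `r`, so `E_qce''(y_F)[u,u]` is an
explicit quadratic form in `a = u'`. Split it as the local QC Hessian `A_F ‖u'‖²` plus a
correction on the atomistic sites. Since `φ''(2F) ≤ 0`, the bound `(x + y)² ≤ 2x² + 2y²` turns
the correction into a telescoping sum, which leaves only the interface terms
`a_{-K-1}² + a_{K+2}² ≤ ‖u'‖²`. -/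

open Finset Real

noncomputable section

/-- The index set `{-N+1, ..., N}` of one period. -/
def idx (N : ℕ) : Finset ℤ := Finset.Icc (-(N : ℤ) + 1) (N : ℤ)

/-- The space 𝒰 of 2N-periodic displacements with zero mean. -/
def uSet (N : ℕ) : Set (ℤ → ℝ) :=
  {u | (∀ ℓ : ℤ, u (ℓ + 2 * (N : ℤ)) = u ℓ) ∧ ∑ ℓ ∈ idx N, u ℓ = 0}

/-- Backward difference `v'_ℓ = ε⁻¹ (v_ℓ - v_{ℓ-1})`, with `ε = 1/N`. -/
def bD (N : ℕ) (v : ℤ → ℝ) (ℓ : ℤ) : ℝ := (N : ℝ) * (v ℓ - v (ℓ - 1))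

/-- Centered second difference `v''_ℓ = ε⁻² (v_{ℓ+1} - 2 v_ℓ + v_{ℓ-1})`. -/
def cD2 (N : ℕ) (v : ℤ → ℝ) (ℓ : ℤ) : ℝ := (N : ℝ) ^ 2 * (v (ℓ + 1) - 2 * v ℓ + v (ℓ - 1))

/-- Weighted ℓ²-norm. -/
def nl2 (N : ℕ) (v : ℤ → ℝ) : ℝ := Real.sqrt ((N : ℝ)⁻¹ * ∑ ℓ ∈ idx N, (v ℓ) ^ 2)

/-- Weighted ℓ¹-norm. -/
def nl1 (N : ℕ) (v : ℤ → ℝ) : ℝ := (N : ℝ)⁻¹ * ∑ ℓ ∈ idx N, |v ℓ|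

/-- ℓ∞-norm over one period. -/
def nlinf (N : ℕ) (v : ℤ → ℝ) : ℝ := ⨆ ℓ : {ℓ : ℤ // ℓ ∈ idx N}, |v ℓ.1|

/-- Weighted ℓ²-inner product. -/
def iprod (N : ℕ) (u v : ℤ → ℝ) : ℝ := (N : ℝ)⁻¹ * ∑ ℓ ∈ idx N, u ℓ * v ℓ

/-- The uniform deformation `(y_F)_ℓ = F ℓ ε`. -/
def yF (N : ℕ) (F : ℝ) : ℤ → ℝ := fun ℓ => F * (ℓ : ℝ) * (N : ℝ)⁻¹

/-- First variation `E'(y)[u]`. -/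
def dE (E : (ℤ → ℝ) → ℝ) (y u : ℤ → ℝ) : ℝ := deriv (fun t : ℝ => E (y + t • u)) 0

/-- Second variation `E''(y)[u,v]`. -/
def d2E (E : (ℤ → ℝ) → ℝ) (y u v : ℤ → ℝ) : ℝ :=
  deriv (fun s : ℝ => deriv (fun t : ℝ => E (y + s • u + t • v)) 0) 0

/-- The atomistic energy. -/
def Ea (N : ℕ) (φ : ℝ → ℝ) (y : ℤ → ℝ) : ℝ :=
  (N : ℝ)⁻¹ * ∑ ℓ ∈ idx N, (φ (bD N y ℓ) + φ (bD N y ℓ + bD N y (ℓ + 1)))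

/-- The local QC (continuum) energy. -/
def Eqcl (N : ℕ) (φ : ℝ → ℝ) (y : ℤ → ℝ) : ℝ :=
  (N : ℝ)⁻¹ * ∑ ℓ ∈ idx N, (φ (bD N y ℓ) + φ (2 * bD N y ℓ))

/-- The QNL atomistic region `{-K-1, ..., K+1}`. -/
def aQnl (K : ℕ) : Finset ℤ := Finset.Icc (-(K : ℤ) - 1) ((K : ℤ) + 1)

/-- The quasi-nonlocal QC energy. -/
def Eqnl (N K : ℕ) (φ : ℝ → ℝ) (y : ℤ → ℝ) : ℝ :=
  (N : ℝ)⁻¹ * ((∑ ℓ ∈ idx N, φ (bD N y ℓ))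
    + (∑ ℓ ∈ aQnl K, φ (bD N y ℓ + bD N y (ℓ + 1)))
    + ∑ ℓ ∈ idx N \ aQnl K, (φ (2 * bD N y ℓ) + φ (2 * bD N y (ℓ + 1))) / 2)

/-- The QCE atomistic region `{-K, ..., K}`. -/
def aQce (K : ℕ) : Finset ℤ := Finset.Icc (-(K : ℤ)) (K : ℤ)

/-- Atomistic energy contribution of atom ℓ. -/
def eAtom (N : ℕ) (φ : ℝ → ℝ) (y : ℤ → ℝ) (ℓ : ℤ) : ℝ :=
  (φ (bD N y ℓ) + φ (bD N y (ℓ + 1)) + φ (bD N y (ℓ - 1) + bD N y ℓ)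
    + φ (bD N y (ℓ + 1) + bD N y (ℓ + 2))) / 2

/-- Continuum energy contribution of atom ℓ. -/
def eCont (N : ℕ) (φ : ℝ → ℝ) (y : ℤ → ℝ) (ℓ : ℤ) : ℝ :=
  (φ (bD N y ℓ) + φ (bD N y (ℓ + 1)) + φ (2 * bD N y ℓ) + φ (2 * bD N y (ℓ + 1))) / 2

/-- The energy-based QC energy. -/
def Eqce (N K : ℕ) (φ : ℝ → ℝ) (y : ℤ → ℝ) : ℝ :=
  (N : ℝ)⁻¹ * ((∑ ℓ ∈ idx N \ aQce K, eCont N φ y ℓ) + ∑ ℓ ∈ aQce K, eAtom N φ y ℓ)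

/-- The prescribed backward difference `ĝ'` of the ghost-force corrector. -/
def ghatD (K : ℕ) (ℓ : ℤ) : ℝ :=
  if ℓ = -(K : ℤ) - 1 ∨ ℓ = (K : ℤ) + 2 then -(1 / 2)
  else if ℓ = -(K : ℤ) + 1 ∨ ℓ = (K : ℤ) then 1 / 2 else 0

/-- `μ_ε = 2 sin(π ε / 2) / ε` with `ε = 1/N`. -/
def muEps (N : ℕ) : ℝ := 2 * Real.sin (Real.pi * (N : ℝ)⁻¹ / 2) / (N : ℝ)⁻¹

/-- The `𝒰^{-1,∞}`-norm of a functional `T` on 𝒰. -/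
def dualNorm (N : ℕ) (T : (ℤ → ℝ) → ℝ) : ℝ :=
  sSup {r : ℝ | ∃ v ∈ uSet N, nl1 N (bD N v) = 1 ∧ r = T v}

open Filter Topology

def HasSecondDerivAt (f : ℝ → ℝ) (v x : ℝ) : Prop :=
  ∃ f' : ℝ → ℝ, (∀ᶠ y in 𝓝 x, HasDerivAt f (f' y) y) ∧ HasDerivAt f' v x

namespace HasSecondDerivAt

variable {f g : ℝ → ℝ} {v w x : ℝ}

theorem deriv_deriv (h : HasSecondDerivAt f v x) : deriv (deriv f) x = v := by
  obtain ⟨f', hf, hf'⟩ := h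
  have hderiv : deriv f =ᶠ[𝓝 x] f' := hf.mono fun y hy => hy.deriv
  rw [hderiv.deriv_eq, hf'.deriv]

theorem add (hf : HasSecondDerivAt f v x) (hg : HasSecondDerivAt g w x) :
    HasSecondDerivAt (fun y => f y + g y) (v + w) x := by
  obtain ⟨f', hf, hf'⟩ := hf
  obtain ⟨g', hg, hg'⟩ := hg
  exact ⟨fun y => f' y + g' y, (hf.and hg).mono fun y hy => hy.1.add hy.2, hf'.add hg'⟩

theorem const_mul (c : ℝ) (hf : HasSecondDerivAt f v x) :
    HasSecondDerivAt (fun y => c * f y) (c * v) x := by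
  obtain ⟨f', hf, hf'⟩ := hf
  exact ⟨fun y => c * f' y, hf.mono fun y hy => hy.const_mul c, hf'.const_mul c⟩

theorem const (c x : ℝ) : HasSecondDerivAt (fun _ => c) 0 x :=
  ⟨fun _ => 0, Eventually.of_forall fun y => hasDerivAt_const y c, hasDerivAt_const x 0⟩

theorem sum {ι : Type*} (s : Finset ι) {f : ι → ℝ → ℝ} {v : ι → ℝ}
    (h : ∀ i ∈ s, HasSecondDerivAt (f i) (v i) x) :
    HasSecondDerivAt (fun y => ∑ i ∈ s, f i y) (∑ i ∈ s, v i) x := by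
  classical
  induction s using Finset.induction_on with
  | empty => simpa using const 0 x
  | insert i s hi ih =>
    simp only [Finset.sum_insert hi]
    exact (h i (s.mem_insert_self i)).add (ih fun j hj => h j (Finset.mem_insert_of_mem hj))

end HasSecondDerivAt

theorem hasSecondDerivAt_comp_affine {φ : ℝ → ℝ} {s : Set ℝ} (hs : IsOpen s)
    (hφ : ContDiffOn ℝ 2 φ s) {c : ℝ} (hc : c ∈ s) (b : ℝ) :
    HasSecondDerivAt (fun r => φ (c + r * b)) (b ^ 2 * deriv (deriv φ) c) 0 := by
  have haffine : ∀ r, HasDerivAt (fun r : ℝ => c + r * b) b r := fun r => by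
    simpa using ((hasDerivAt_id r).mul_const b).const_add c
  have hmem : ∀ᶠ r in 𝓝 (0 : ℝ), c + r * b ∈ s :=
    (haffine 0).continuousAt.preimage_mem_nhds (hs.mem_nhds (by simpa using hc))
  have hφ' : ContDiffOn ℝ 1 (deriv φ) s := hφ.deriv_of_isOpen hs (by norm_num)
  refine ⟨fun r => deriv φ (c + r * b) * b, hmem.mono fun r hr => ?_, ?_⟩
  · have hφr : DifferentiableAt ℝ φ (c + r * b) :=
      (hφ.differentiableOn (by norm_num) _ hr).differentiableAt (hs.mem_nhds hr)
    exact hφr.hasDerivAt.comp r (haffine r)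
  · have hφ'c : DifferentiableAt ℝ (deriv φ) (c + 0 * b) := by
      rw [zero_mul, add_zero]
      exact (hφ'.differentiableOn (by norm_num) _ hc).differentiableAt (hs.mem_nhds hc)
    have h := (hφ'c.hasDerivAt.comp 0 (haffine 0)).mul_const b
    rw [zero_mul, add_zero] at h
    exact h.congr_deriv (by ring)

theorem d2E_self (E : (ℤ → ℝ) → ℝ) (y u : ℤ → ℝ) :
    d2E E y u u = deriv (deriv fun r : ℝ => E (y + r • u)) 0 := by
  have hshift : ∀ s : ℝ,
      deriv (fun t : ℝ => E (y + s • u + t • u)) 0 = deriv (fun r : ℝ => E (y + r • u)) s :=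
    fun s => by
      simpa [add_assoc, ← add_smul] using deriv_comp_const_add (fun r : ℝ => E (y + r • u)) s 0
  simp only [d2E, hshift]

theorem bD_yF_add_smul {N : ℕ} (hN : N ≠ 0) (F r : ℝ) (u : ℤ → ℝ) (ℓ : ℤ) :
    bD N (yF N F + r • u) ℓ = F + r * bD N u ℓ := by
  simp only [bD, yF, Pi.add_apply, Pi.smul_apply, smul_eq_mul]
  push_cast
  field_simp
  ring

theorem bD_periodic {N : ℕ} {u : ℤ → ℝ} (hu : Function.Periodic u (2 * N)) :
    Function.Periodic (bD N u) (2 * N) := fun ℓ => by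
  simp only [bD, hu ℓ, show ℓ + 2 * N - 1 = ℓ - 1 + 2 * N by ring, hu (ℓ - 1)]

theorem Finset.sum_Icc_int_sub {M : Type*} [AddCommGroup M] (g : ℤ → M) {m n : ℤ}
    (h : m - 1 ≤ n) : ∑ ℓ ∈ Finset.Icc m n, (g (ℓ + 1) - g ℓ) = g (n + 1) - g m := by
  induction n, h using Int.leInduction with
  | base => simp
  | succ n hn ih =>
    rw [← Finset.insert_Icc_right_eq_Icc_add_one (by omega),
      Finset.sum_insert (by simp), ih]
    abel

theorem sum_idx_comp_add_one {M : Type*} [AddCommGroup M] {N : ℕ} {g : ℤ → M}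
    (hg : Function.Periodic g (2 * N)) :
    ∑ ℓ ∈ idx N, g (ℓ + 1) = ∑ ℓ ∈ idx N, g ℓ := by
  rw [← sub_eq_zero, ← Finset.sum_sub_distrib, idx, Finset.sum_Icc_int_sub g (by omega),
    show (N : ℤ) + 1 = -N + 1 + 2 * N by ring, hg, sub_self]

section Hessian

variable {N K : ℕ} {φ : ℝ → ℝ} {F p q : ℝ} {a : ℤ → ℝ}

def eContHess (p q : ℝ) (a : ℤ → ℝ) (ℓ : ℤ) : ℝ :=
  (p * (a ℓ ^ 2 + a (ℓ + 1) ^ 2) + q * ((2 * a ℓ) ^ 2 + (2 * a (ℓ + 1)) ^ 2)) / 2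

def eAtomHess (p q : ℝ) (a : ℤ → ℝ) (ℓ : ℤ) : ℝ :=
  (p * (a ℓ ^ 2 + a (ℓ + 1) ^ 2) + q * ((a (ℓ - 1) + a ℓ) ^ 2 + (a (ℓ + 1) + a (ℓ + 2)) ^ 2)) / 2

theorem hasSecondDerivAt_eCont (hN : N ≠ 0) (hφ : ContDiffOn ℝ 2 φ (Set.Ioi 0)) (hF : 0 < F)
    (u : ℤ → ℝ) (ℓ : ℤ) :
    HasSecondDerivAt (fun r => eCont N φ (yF N F + r • u) ℓ)
      (eContHess (deriv (deriv φ) F) (deriv (deriv φ) (2 * F)) (bD N u) ℓ) 0 := by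
  have hF2 : 0 < 2 * F := by positivity
  have h := ((((hasSecondDerivAt_comp_affine isOpen_Ioi hφ hF (bD N u ℓ)).add
    (hasSecondDerivAt_comp_affine isOpen_Ioi hφ hF (bD N u (ℓ + 1)))).add
    (hasSecondDerivAt_comp_affine isOpen_Ioi hφ hF2 (2 * bD N u ℓ))).add
    (hasSecondDerivAt_comp_affine isOpen_Ioi hφ hF2 (2 * bD N u (ℓ + 1)))).const_mul (1 / 2)
  convert h using 1
  · funext r
    simp only [eCont, bD_yF_add_smul hN]
    ring_nf
  · simp only [eContHess]
    ring

theorem hasSecondDerivAt_eAtom (hN : N ≠ 0) (hφ : ContDiffOn ℝ 2 φ (Set.Ioi 0)) (hF : 0 < F)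
    (u : ℤ → ℝ) (ℓ : ℤ) :
    HasSecondDerivAt (fun r => eAtom N φ (yF N F + r • u) ℓ)
      (eAtomHess (deriv (deriv φ) F) (deriv (deriv φ) (2 * F)) (bD N u) ℓ) 0 := by
  have hF2 : 0 < 2 * F := by positivity
  have h := ((((hasSecondDerivAt_comp_affine isOpen_Ioi hφ hF (bD N u ℓ)).add
    (hasSecondDerivAt_comp_affine isOpen_Ioi hφ hF (bD N u (ℓ + 1)))).add
    (hasSecondDerivAt_comp_affine isOpen_Ioi hφ hF2 (bD N u (ℓ - 1) + bD N u ℓ))).add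
    (hasSecondDerivAt_comp_affine isOpen_Ioi hφ hF2 (bD N u (ℓ + 1) + bD N u (ℓ + 2)))).const_mul
    (1 / 2)
  convert h using 1
  · funext r
    simp only [eAtom, bD_yF_add_smul hN]
    ring_nf
  · simp only [eAtomHess]
    ring

theorem hasSecondDerivAt_Eqce (hN : N ≠ 0) (K : ℕ) (hφ : ContDiffOn ℝ 2 φ (Set.Ioi 0))
    (hF : 0 < F) (u : ℤ → ℝ) :
    HasSecondDerivAt (fun r => Eqce N K φ (yF N F + r • u))
      ((N : ℝ)⁻¹ *
        (∑ ℓ ∈ idx N \ aQce K, eContHess (deriv (deriv φ) F) (deriv (deriv φ) (2 * F)) (bD N u) ℓ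
          + ∑ ℓ ∈ aQce K, eAtomHess (deriv (deriv φ) F) (deriv (deriv φ) (2 * F)) (bD N u) ℓ)) 0 :=
  ((HasSecondDerivAt.sum _ fun ℓ _ => hasSecondDerivAt_eCont hN hφ hF u ℓ).add
    (HasSecondDerivAt.sum _ fun ℓ _ => hasSecondDerivAt_eAtom hN hφ hF u ℓ)).const_mul _

theorem sum_idx_eContHess (ha : Function.Periodic a (2 * N)) :
    ∑ ℓ ∈ idx N, eContHess p q a ℓ = (p + 4 * q) * ∑ ℓ ∈ idx N, a ℓ ^ 2 := by
  have hpt : ∀ ℓ, eContHess p q a ℓ = (p + 4 * q) / 2 * (a ℓ ^ 2 + a (ℓ + 1) ^ 2) := fun ℓ => by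
    simp only [eContHess]
    ring
  have hshift : ∑ ℓ ∈ idx N, a (ℓ + 1) ^ 2 = ∑ ℓ ∈ idx N, a ℓ ^ 2 :=
    sum_idx_comp_add_one (g := fun ℓ => a ℓ ^ 2) (ha.comp fun x => x ^ 2)
  simp only [hpt, ← Finset.mul_sum, Finset.sum_add_distrib, hshift]
  ring

theorem le_eAtomHess_sub_eContHess (hq : q ≤ 0) (a : ℤ → ℝ) (ℓ : ℤ) :
    q * ((a (ℓ - 1) ^ 2 - a ℓ ^ 2) + (a (ℓ + 2) ^ 2 - a (ℓ + 1) ^ 2))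
      ≤ eAtomHess p q a ℓ - eContHess p q a ℓ := by
  have hdiff : eAtomHess p q a ℓ - eContHess p q a ℓ
      - q * ((a (ℓ - 1) ^ 2 - a ℓ ^ 2) + (a (ℓ + 2) ^ 2 - a (ℓ + 1) ^ 2))
      = -q / 2 * ((a (ℓ - 1) - a ℓ) ^ 2 + (a (ℓ + 2) - a (ℓ + 1)) ^ 2) := by
    simp only [eAtomHess, eContHess]
    ring
  have hq' : 0 ≤ -q := neg_nonneg.2 hq
  have hnonneg : 0 ≤ -q / 2 * ((a (ℓ - 1) - a ℓ) ^ 2 + (a (ℓ + 2) - a (ℓ + 1)) ^ 2) := by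
    positivity
  linarith

theorem sum_aQce_interface (a : ℤ → ℝ) :
    ∑ ℓ ∈ aQce K, ((a (ℓ - 1) ^ 2 - a ℓ ^ 2) + (a (ℓ + 2) ^ 2 - a (ℓ + 1) ^ 2))
      = (a (-K - 1) ^ 2 - a K ^ 2) + (a (K + 2) ^ 2 - a (-K + 1) ^ 2) := by
  have hleft := Finset.sum_Icc_int_sub (fun j => a (j - 1) ^ 2) (m := -K) (n := K) (by omega)
  have hright := Finset.sum_Icc_int_sub (fun j => a (j + 1) ^ 2) (m := -K) (n := K) (by omega)
  simp only [add_sub_cancel_right, add_assoc, one_add_one_eq_two] at hleft hright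
  simp only [aQce, Finset.sum_add_distrib, Finset.sum_sub_distrib] at hleft hright ⊢
  linarith

theorem sq_add_sq_le_sum_idx (hKN : K + 2 ≤ N) (a : ℤ → ℝ) :
    a (-K - 1) ^ 2 + a (K + 2) ^ 2 ≤ ∑ ℓ ∈ idx N, a ℓ ^ 2 := by
  rw [← Finset.sum_pair (f := fun ℓ => a ℓ ^ 2) (by omega : (-K - 1 : ℤ) ≠ K + 2)]
  refine Finset.sum_le_sum_of_subset_of_nonneg (fun ℓ hℓ => ?_) fun ℓ _ _ => sq_nonneg _
  simp only [Finset.mem_insert, Finset.mem_singleton] at hℓ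
  simp only [idx, Finset.mem_Icc]
  omega

theorem le_sum_eContHess_add_sum_eAtomHess (hKN : K + 2 ≤ N) (hq : q ≤ 0)
    (ha : Function.Periodic a (2 * N)) :
    (p + 4 * q + q) * ∑ ℓ ∈ idx N, a ℓ ^ 2
      ≤ ∑ ℓ ∈ idx N \ aQce K, eContHess p q a ℓ + ∑ ℓ ∈ aQce K, eAtomHess p q a ℓ := by
  have hsub : aQce K ⊆ idx N := fun ℓ hℓ => by
    simp only [aQce, idx, Finset.mem_Icc] at hℓ ⊢
    omega
  have hinterface : (a (-K - 1) ^ 2 - a K ^ 2) + (a (K + 2) ^ 2 - a (-K + 1) ^ 2)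
      ≤ ∑ ℓ ∈ idx N, a ℓ ^ 2 := by
    linarith [sq_add_sq_le_sum_idx hKN a, sq_nonneg (a K), sq_nonneg (a (-K + 1))]
  calc (p + 4 * q + q) * ∑ ℓ ∈ idx N, a ℓ ^ 2
      ≤ ∑ ℓ ∈ idx N, eContHess p q a ℓ
          + q * ((a (-K - 1) ^ 2 - a K ^ 2) + (a (K + 2) ^ 2 - a (-K + 1) ^ 2)) := by
        rw [sum_idx_eContHess ha]
        linarith [mul_le_mul_of_nonpos_left hinterface hq]
    _ ≤ ∑ ℓ ∈ idx N, eContHess p q a ℓ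
          + ∑ ℓ ∈ aQce K, (eAtomHess p q a ℓ - eContHess p q a ℓ) := by
        rw [← sum_aQce_interface, Finset.mul_sum]
        gcongr with ℓ
        exact le_eAtomHess_sub_eContHess hq a ℓ
    _ = ∑ ℓ ∈ idx N \ aQce K, eContHess p q a ℓ + ∑ ℓ ∈ aQce K, eAtomHess p q a ℓ := by
        rw [← Finset.sum_sdiff hsub, Finset.sum_sub_distrib]
        ring

end Hessian

theorem stmt10_general (N K : ℕ) (hKN : K + 3 ≤ N)
    (φ : ℝ → ℝ) (hφ : ContDiffOn ℝ 2 φ (Set.Ioi 0)) (F : ℝ) (hF : 0 < F)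
    (h2F : deriv (deriv φ) (2 * F) ≤ 0) :
    ∀ u ∈ uSet N,
      (deriv (deriv φ) F + 4 * deriv (deriv φ) (2 * F) + deriv (deriv φ) (2 * F))
          * (nl2 N (bD N u)) ^ 2
        ≤ d2E (Eqce N K φ) (yF N F) u u := by
  rintro u ⟨hu, -⟩
  have hN : N ≠ 0 := by omega
  have hnorm : nl2 N (bD N u) ^ 2 = (N : ℝ)⁻¹ * ∑ ℓ ∈ idx N, bD N u ℓ ^ 2 := by
    rw [nl2, Real.sq_sqrt (by positivity)]
  rw [d2E_self, (hasSecondDerivAt_Eqce hN K hφ hF u).deriv_deriv, hnorm, mul_left_comm]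
  exact mul_le_mul_of_nonneg_left
    (le_sum_eContHess_add_sum_eAtomHess (by omega) h2F (bD_periodic hu)) (by positivity)

theorem stmt10 (N K : ℕ) (hN : 2 ≤ N) (hK : 1 < K) (hKN : K + 3 ≤ N)
    (φ : ℝ → ℝ) (hφ : ContDiffOn ℝ 2 φ (Set.Ioi 0)) (F : ℝ) (hF : 0 < F)
    (h2F : deriv (deriv φ) (2 * F) ≤ 0) :
    ∀ u ∈ uSet N,
      (deriv (deriv φ) F + 4 * deriv (deriv φ) (2 * F) + deriv (deriv φ) (2 * F))
          * (nl2 N (bD N u)) ^ 2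
        ≤ d2E (Eqce N K φ) (yF N F) u u :=
  stmt10_general N K hKN φ hφ F hF h2F
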